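/- Correct selection at every GARD step with inlier and outlier noise: let Q ∈ ℝ^{n×m} have orthonormal columns (QᵀQ = Iₘ), let u₀ ∈ ℝⁿ be s-sparse with support S, let η ∈ ℝⁿ with ‖η‖₂ ≤ ε₀, and let δ ∈ [0,1] satisfy the principal-angle bound for sparsity level s with δ < √2/2 and δ² < (min{|u₀ᵢ| : i ∈ S} − (2+√6) ε₀) / (2 ‖u₀‖₂). Then for every nonempty S_k ⊊ S (with k = |S_k|), the matrix M_k = I_k − I_{S_k}ᵀQQᵀI_{S_k} is invertible and the residual r = v_k + η_k − QQᵀ v_k − QQᵀ η_k, where v_k = F_{S∖S_k}(u₀) + I_{S_k} M_k⁻¹ I_{S_k}ᵀ Q Qᵀ F_{S∖S_k}(u₀) and η_k = F_{J∖S_k}(η) + I_{S_k} M_k⁻¹ I_{S_k}ᵀ Q Qᵀ F_{J∖S_k}(η) with J = {1,…,n}, satisfies |rᵢ| > |rⱼ| for every i ∈ S∖S_k and every j ∈ Sᶜ; hence GARD recovers the support of the sparse outlier vector u₀ exactly. -/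

import Mathlib

open Matrix

/-- Euclidean (ℓ₂) norm of a finitely-indexed real vector. -/
noncomputable def norm2 {ι : Type*} [Fintype ι] (v : ι → ℝ) : ℝ :=
  Real.sqrt (∑ i, v i ^ 2)

/-- A vector of `ℝⁿ` is `s`-sparse if it has at most `s` nonzero entries. -/
def Sparse {n : ℕ} (s : ℕ) (v : Fin n → ℝ) : Prop :=
  ∃ T : Finset (Fin n), T.card ≤ s ∧ ∀ i ∉ T, v i = 0

/-- `δ` satisfies the principal-angle bound for `Q` at sparsity level `s`:
`|⟨Qw, v⟩| ≤ δ ‖Qw‖₂ ‖v‖₂` for every `w` and every `s`-sparse `v`. -/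
def PABound {n m : ℕ} (Q : Matrix (Fin n) (Fin m) ℝ) (s : ℕ) (δ : ℝ) : Prop :=
  ∀ (w : Fin m → ℝ) (v : Fin n → ℝ), Sparse s v →
    |Q.mulVec w ⬝ᵥ v| ≤ δ * norm2 (Q.mulVec w) * norm2 v

/-- The `n × |S|` matrix `I_S` whose columns are the standard basis vectors `e_j`, `j ∈ S`. -/
def colSel {n : ℕ} (S : Finset (Fin n)) : Matrix (Fin n) {i // i ∈ S} ℝ :=
  Matrix.of fun i j => if i = (j : Fin n) then 1 else 0

/-- `F_S(a) = I_S I_Sᵀ a`: the vector agreeing with `a` on `S` and zero elsewhere. -/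
def restrictVec {n : ℕ} (S : Finset (Fin n)) (a : Fin n → ℝ) : Fin n → ℝ :=
  fun i => if i ∈ S then a i else 0

/-!
Write `P = QQᵀ`, the orthogonal projection onto the range of `Q`. The principal-angle bound says
that `P` shrinks `s`-sparse vectors by the factor `δ`, and that the part of any `Pv` on at most `s`
coordinates has norm at most `δ‖Pv‖`; in particular every entry of `Pv` is at most `δ‖Pv‖`.
Hence the Gram block `I_Sₖᵀ P I_Sₖ` has norm at most `δ² < 1/2`, so `Mₖ` is invertible with
`‖Mₖ⁻¹‖ ≤ 2`. The least-squares corrections on `Sₖ` are then small: the one in `vₖ` is at most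
`2δ²‖u₀‖ < min |u₀ᵢ|`, so `‖vₖ‖ ≤ ‖u₀‖`, and `‖ηₖ‖² ≤ 3ε₀²`. Off `Sₖ` the residual is `u₀ + η`
up to entries of `Pvₖ` and `Pηₖ`, of size at most `δ²‖u₀‖` and `√3 δ ε₀ ≤ (√6/2) ε₀`, and the gap
assumption separates `|rᵢ|`, `i ∈ S ∖ Sₖ`, from `|rⱼ|`, `j ∉ S`.
-/

section norm2

variable {ι : Type*} [Fintype ι]

lemma norm2_eq_norm_toLp (v : ι → ℝ) : norm2 v = ‖WithLp.toLp 2 v‖ := by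
  simp [norm2, EuclideanSpace.norm_eq]

lemma norm2_nonneg (v : ι → ℝ) : 0 ≤ norm2 v := Real.sqrt_nonneg _

lemma norm2_eq_zero {v : ι → ℝ} : norm2 v = 0 ↔ v = 0 := by
  simp [norm2_eq_norm_toLp]

lemma sq_norm2 (v : ι → ℝ) : norm2 v ^ 2 = v ⬝ᵥ v := by
  rw [norm2_eq_norm_toLp, ← real_inner_self_eq_norm_sq, EuclideanSpace.inner_toLp_toLp,
    star_trivial]

lemma norm2_add_le (v w : ι → ℝ) : norm2 (v + w) ≤ norm2 v + norm2 w := by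
  simpa [norm2_eq_norm_toLp] using norm_add_le (WithLp.toLp 2 v) (WithLp.toLp 2 w)

lemma abs_apply_le_norm2 (v : ι → ℝ) (i : ι) : |v i| ≤ norm2 v := by
  simpa [norm2_eq_norm_toLp] using PiLp.norm_apply_le (WithLp.toLp 2 v) i

lemma abs_dotProduct_le_norm2_mul_norm2 (v w : ι → ℝ) : |v ⬝ᵥ w| ≤ norm2 v * norm2 w := by
  simpa [norm2_eq_norm_toLp, EuclideanSpace.inner_toLp_toLp, dotProduct_comm] using
    abs_real_inner_le_norm (WithLp.toLp 2 v) (WithLp.toLp 2 w)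

lemma sq_norm2_add_of_dotProduct_eq_zero {v w : ι → ℝ} (h : v ⬝ᵥ w = 0) :
    norm2 (v + w) ^ 2 = norm2 v ^ 2 + norm2 w ^ 2 := by
  rw [sq_norm2, sq_norm2, sq_norm2, add_dotProduct, dotProduct_add, dotProduct_add,
    dotProduct_comm w v, h]
  ring

end norm2

lemma le_of_sq_le_mul {p c : ℝ} (hc : 0 ≤ c) (h : p ^ 2 ≤ c * p) : p ≤ c := by
  nlinarith

section selection

variable {n : ℕ}

lemma restrictVec_add_restrictVec {T T' : Finset (Fin n)} (h : Disjoint T T') (a : Fin n → ℝ) :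
    restrictVec T a + restrictVec T' a = restrictVec (T ∪ T') a := by
  ext i
  by_cases hT : i ∈ T
  · simp [restrictVec, hT, Finset.disjoint_left.mp h hT]
  · simp [restrictVec, hT]

lemma restrictVec_dotProduct_restrictVec {T T' : Finset (Fin n)} (h : Disjoint T T')
    (a b : Fin n → ℝ) : restrictVec T a ⬝ᵥ restrictVec T' b = 0 :=
  Finset.sum_eq_zero fun i _ => by
    by_cases hT : i ∈ T
    · simp [restrictVec, Finset.disjoint_left.mp h hT]
    · simp [restrictVec, hT]

lemma restrictVec_dotProduct_self (T : Finset (Fin n)) (a : Fin n → ℝ) :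
    restrictVec T a ⬝ᵥ a = norm2 (restrictVec T a) ^ 2 := by
  rw [sq_norm2]
  exact Finset.sum_congr rfl fun i _ => by by_cases hT : i ∈ T <;> simp [restrictVec, hT]

lemma norm2_restrictVec_le (T : Finset (Fin n)) (a : Fin n → ℝ) :
    norm2 (restrictVec T a) ≤ norm2 a := by
  refine le_of_sq_le_mul (norm2_nonneg _) ?_
  rw [← restrictVec_dotProduct_self]
  exact (le_abs_self _).trans ((abs_dotProduct_le_norm2_mul_norm2 _ _).trans_eq (mul_comm _ _))

lemma sq_norm2_restrictVec_add_le {T T' : Finset (Fin n)} (h : Disjoint T T') (a : Fin n → ℝ) :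
    norm2 (restrictVec T a) ^ 2 + norm2 (restrictVec T' a) ^ 2 ≤ norm2 a ^ 2 := by
  rw [← sq_norm2_add_of_dotProduct_eq_zero (restrictVec_dotProduct_restrictVec h a a),
    restrictVec_add_restrictVec h]
  exact pow_le_pow_left₀ (norm2_nonneg _) (norm2_restrictVec_le _ a) 2

lemma sparse_restrictVec {s : ℕ} {T : Finset (Fin n)} (hT : T.card ≤ s) (a : Fin n → ℝ) :
    Sparse s (restrictVec T a) :=
  ⟨T, hT, fun _ hi => if_neg hi⟩

lemma inf'_abs_le_norm2_restrictVec {S T : Finset (Fin n)} (hS : S.Nonempty) (hTS : T ⊆ S)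
    (hT : T.Nonempty) (a : Fin n → ℝ) : S.inf' hS (fun i => |a i|) ≤ norm2 (restrictVec T a) := by
  obtain ⟨k, hk⟩ := hT
  calc S.inf' hS (fun i => |a i|) ≤ |a k| := Finset.inf'_le _ (hTS hk)
    _ = |restrictVec T a k| := by rw [restrictVec, if_pos hk]
    _ ≤ norm2 (restrictVec T a) := abs_apply_le_norm2 _ k

variable {S : Finset (Fin n)}

lemma colSel_transpose_mulVec (y : Fin n → ℝ) : (colSel S)ᵀ *ᵥ y = fun j : S => y j := by
  ext j
  simp [mulVec, dotProduct, colSel, ite_mul]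

lemma colSel_mulVec_apply (β : S → ℝ) (i : Fin n) :
    (colSel S *ᵥ β) i = if h : i ∈ S then β ⟨i, h⟩ else 0 := by
  simp only [mulVec, dotProduct, colSel, of_apply, ite_mul, one_mul, zero_mul]
  split_ifs with h
  · rw [Finset.sum_eq_single_of_mem ⟨i, h⟩ (Finset.mem_univ _)
      fun j _ hj => if_neg fun hij => hj (Subtype.ext hij.symm)]
    exact if_pos rfl
  · exact Finset.sum_eq_zero fun j _ => if_neg fun (hij : i = j) => h (hij ▸ j.2)

lemma colSel_mulVec_apply_of_notMem (β : S → ℝ) {i : Fin n} (hi : i ∉ S) :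
    (colSel S *ᵥ β) i = 0 := by
  rw [colSel_mulVec_apply, dif_neg hi]

lemma colSel_transpose_mulVec_colSel_mulVec (β : S → ℝ) :
    (colSel S)ᵀ *ᵥ (colSel S *ᵥ β) = β := by
  ext j
  rw [colSel_transpose_mulVec]
  dsimp only
  rw [colSel_mulVec_apply, dif_pos j.2]

lemma colSel_mulVec_colSel_transpose_mulVec (a : Fin n → ℝ) :
    colSel S *ᵥ ((colSel S)ᵀ *ᵥ a) = restrictVec S a := by
  ext i
  rw [colSel_mulVec_apply, colSel_transpose_mulVec, restrictVec]
  split_ifs <;> rfl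

lemma norm2_colSel_mulVec (β : S → ℝ) : norm2 (colSel S *ᵥ β) = norm2 β := by
  refine (pow_left_inj₀ (norm2_nonneg _) (norm2_nonneg _) two_ne_zero).mp ?_
  rw [sq_norm2, sq_norm2, dotProduct_comm, dotProduct_mulVec, ← mulVec_transpose,
    colSel_transpose_mulVec_colSel_mulVec]

lemma norm2_colSel_transpose_mulVec (a : Fin n → ℝ) :
    norm2 ((colSel S)ᵀ *ᵥ a) = norm2 (restrictVec S a) := by
  rw [← norm2_colSel_mulVec, colSel_mulVec_colSel_transpose_mulVec]

lemma sq_norm2_add_colSel_mulVec {y : Fin n → ℝ} (hy : ∀ i ∈ S, y i = 0) (β : S → ℝ) :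
    norm2 (y + colSel S *ᵥ β) ^ 2 = norm2 y ^ 2 + norm2 β ^ 2 := by
  rw [sq_norm2_add_of_dotProduct_eq_zero, norm2_colSel_mulVec]
  refine Finset.sum_eq_zero fun i _ => ?_
  by_cases hi : i ∈ S
  · simp [hy i hi]
  · simp [colSel_mulVec_apply_of_notMem β hi]

lemma add_colSel_mulVec_apply_of_notMem (y : Fin n → ℝ) (β : S → ℝ) {i : Fin n} (hi : i ∉ S) :
    (y + colSel S *ᵥ β) i = y i := by
  rw [Pi.add_apply, colSel_mulVec_apply_of_notMem β hi, add_zero]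

lemma sparse_restrictVec_add_colSel_mulVec {s : ℕ} {T : Finset (Fin n)} (h : (T ∪ S).card ≤ s)
    (a : Fin n → ℝ) (β : S → ℝ) : Sparse s (restrictVec T a + colSel S *ᵥ β) :=
  ⟨T ∪ S, h, fun i hi => by
    rw [Finset.mem_union, not_or] at hi
    rw [add_colSel_mulVec_apply_of_notMem _ _ hi.2, restrictVec, if_neg hi.1]⟩

lemma norm2_restrictVec_add_colSel_mulVec_le {T : Finset (Fin n)} (h : Disjoint T S)
    {a : Fin n → ℝ} {β : S → ℝ} (hβ : norm2 β ≤ norm2 (restrictVec S a)) :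
    norm2 (restrictVec T a + colSel S *ᵥ β) ≤ norm2 a := by
  have hy : ∀ i ∈ S, restrictVec T a i = 0 := fun i hi =>
    if_neg (Finset.disjoint_right.mp h hi)
  refine (pow_le_pow_iff_left₀ (norm2_nonneg _) (norm2_nonneg _) two_ne_zero).mp ?_
  rw [sq_norm2_add_colSel_mulVec hy]
  have := pow_le_pow_left₀ (norm2_nonneg _) hβ 2
  linarith [sq_norm2_restrictVec_add_le h a]

end selection

section oneSub

variable {ι : Type*} [Fintype ι] [DecidableEq ι] {B : Matrix ι ι ℝ} {c : ℝ}

lemma isUnit_one_sub_of_norm2_mulVec_le (hc : c < 1) (hB : ∀ β, norm2 (B *ᵥ β) ≤ c * norm2 β) :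
    IsUnit (1 - B) := by
  refine mulVec_injective_iff_isUnit.mp fun β γ h => ?_
  have hfix : B *ᵥ (β - γ) = β - γ := by
    have : (1 - B) *ᵥ (β - γ) = 0 := by rw [mulVec_sub, h, sub_self]
    rwa [sub_mulVec, one_mulVec, sub_eq_zero, eq_comm] at this
  have hle := hB (β - γ)
  rw [hfix] at hle
  have : norm2 (β - γ) = 0 := by nlinarith [norm2_nonneg (β - γ)]
  exact sub_eq_zero.mp (norm2_eq_zero.mp this)

lemma norm2_inv_one_sub_mulVec_le (hc : c < 1) (hB : ∀ β, norm2 (B *ᵥ β) ≤ c * norm2 β)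
    (x : ι → ℝ) : (1 - c) * norm2 ((1 - B)⁻¹ *ᵥ x) ≤ norm2 x := by
  set β := (1 - B)⁻¹ *ᵥ x
  have hβ : x + B *ᵥ β = β := by
    have hdet := (isUnit_iff_isUnit_det _).mp (isUnit_one_sub_of_norm2_mulVec_le hc hB)
    have : (1 - B) *ᵥ β = x := by rw [mulVec_mulVec, mul_nonsing_inv _ hdet, one_mulVec]
    rw [← this, sub_mulVec, one_mulVec, sub_add_cancel]
  have := norm2_add_le x (B *ᵥ β)
  rw [hβ] at this
  linarith [hB β]

end oneSub

lemma mul_lt_of_lt_div_of_nonneg {a b c : ℝ} (ha : 0 ≤ a) (hc : 0 ≤ c) (h : a < b / c) :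
    a * c < b := by
  rcases hc.eq_or_lt with rfl | hc
  · rw [div_zero] at h
    linarith
  · exact (lt_div_iff₀ hc).mp h

lemma abs_lt_abs_of_abs_sub_le {x x₀ y w : ℝ} (hx : |x - x₀| ≤ w) (hy : |y| ≤ w)
    (hgap : 2 * w < |x₀|) : |y| < |x| := by
  have := abs_sub_abs_le_abs_sub x₀ x
  rw [abs_sub_comm] at this
  linarith

section projection

variable {n m s : ℕ} {Q : Matrix (Fin n) (Fin m) ℝ} {δ : ℝ}

lemma sq_norm2_mulVec_transpose_mulVec (hQ : Qᵀ * Q = 1) (x : Fin n → ℝ) :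
    norm2 (Q *ᵥ (Qᵀ *ᵥ x)) ^ 2 = x ⬝ᵥ Q *ᵥ (Qᵀ *ᵥ x) := by
  rw [sq_norm2, dotProduct_mulVec x, ← mulVec_transpose, dotProduct_mulVec, ← mulVec_transpose,
    mulVec_mulVec, hQ, one_mulVec]

lemma norm2_mulVec_transpose_mulVec_le (hQ : Qᵀ * Q = 1) (x : Fin n → ℝ) :
    norm2 (Q *ᵥ (Qᵀ *ᵥ x)) ≤ norm2 x := by
  refine le_of_sq_le_mul (norm2_nonneg x) ?_
  rw [sq_norm2_mulVec_transpose_mulVec hQ]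
  exact (le_abs_self _).trans (abs_dotProduct_le_norm2_mul_norm2 _ _)

/-- `Mₖ⁻¹ I_Sᵀ QQᵀ y` with `Mₖ = 1 - I_Sᵀ QQᵀ I_S`; `gardVec Q S y = y + I_S (gardCoeff Q S y)`
is the paper's `vₖ` (for `y = F_{S∖Sₖ}(u₀)`) and `ηₖ` (for `y = F_{J∖Sₖ}(η)`). -/
noncomputable def gardCoeff (Q : Matrix (Fin n) (Fin m) ℝ) (S : Finset (Fin n)) (y : Fin n → ℝ) :
    S → ℝ :=
  (1 - (colSel S)ᵀ * Q * Qᵀ * colSel S)⁻¹ *ᵥ ((colSel S)ᵀ *ᵥ (Q *ᵥ (Qᵀ *ᵥ y)))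

noncomputable def gardVec (Q : Matrix (Fin n) (Fin m) ℝ) (S : Finset (Fin n)) (y : Fin n → ℝ) :
    Fin n → ℝ :=
  y + colSel S *ᵥ gardCoeff Q S y

namespace PABound

variable (hPA : PABound Q s δ) (hδ : 0 ≤ δ)
include hPA hδ

lemma norm2_restrictVec_mulVec_le {T : Finset (Fin n)} (hT : T.card ≤ s) (w : Fin m → ℝ) :
    norm2 (restrictVec T (Q *ᵥ w)) ≤ δ * norm2 (Q *ᵥ w) := by
  refine le_of_sq_le_mul (mul_nonneg hδ (norm2_nonneg _)) ?_
  rw [← restrictVec_dotProduct_self, dotProduct_comm]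
  exact (le_abs_self _).trans (hPA w _ (sparse_restrictVec hT _))

lemma abs_mulVec_apply_le (hs : 1 ≤ s) (w : Fin m → ℝ) (t : Fin n) :
    |(Q *ᵥ w) t| ≤ δ * norm2 (Q *ᵥ w) :=
  calc |(Q *ᵥ w) t| = |restrictVec {t} (Q *ᵥ w) t| := by simp [restrictVec]
    _ ≤ norm2 (restrictVec {t} (Q *ᵥ w)) := abs_apply_le_norm2 _ t
    _ ≤ δ * norm2 (Q *ᵥ w) := hPA.norm2_restrictVec_mulVec_le hδ (by simpa using hs) w

variable (hQ : Qᵀ * Q = 1)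
include hQ

lemma norm2_mulVec_transpose_mulVec_le_of_sparse {v : Fin n → ℝ} (hv : Sparse s v) :
    norm2 (Q *ᵥ (Qᵀ *ᵥ v)) ≤ δ * norm2 v := by
  refine le_of_sq_le_mul (mul_nonneg hδ (norm2_nonneg v)) ?_
  rw [sq_norm2_mulVec_transpose_mulVec hQ, dotProduct_comm]
  exact (le_abs_self _).trans ((hPA _ v hv).trans_eq (by ring))

lemma norm2_gram_mulVec_le {S : Finset (Fin n)} (hS : S.card ≤ s) (β : S → ℝ) :
    norm2 (((colSel S)ᵀ * Q * Qᵀ * colSel S) *ᵥ β) ≤ δ ^ 2 * norm2 β := by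
  have hsp : Sparse s (colSel S *ᵥ β) :=
    ⟨S, hS, fun _ hi => colSel_mulVec_apply_of_notMem β hi⟩
  calc norm2 (((colSel S)ᵀ * Q * Qᵀ * colSel S) *ᵥ β)
      = norm2 (restrictVec S (Q *ᵥ (Qᵀ *ᵥ (colSel S *ᵥ β)))) := by
        rw [← mulVec_mulVec, ← mulVec_mulVec, ← mulVec_mulVec, norm2_colSel_transpose_mulVec]
    _ ≤ δ * norm2 (Q *ᵥ (Qᵀ *ᵥ (colSel S *ᵥ β))) := hPA.norm2_restrictVec_mulVec_le hδ hS _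
    _ ≤ δ * (δ * norm2 (colSel S *ᵥ β)) :=
        mul_le_mul_of_nonneg_left (hPA.norm2_mulVec_transpose_mulVec_le_of_sparse hδ hQ hsp) hδ
    _ = δ ^ 2 * norm2 β := by rw [norm2_colSel_mulVec]; ring

lemma abs_residual_sub_le (hs : 1 ≤ s) {v : Fin n → ℝ} (hv : Sparse s v) (e : Fin n → ℝ)
    (t : Fin n) :
    |(v + e - Q *ᵥ (Qᵀ *ᵥ v) - Q *ᵥ (Qᵀ *ᵥ e)) t - v t| ≤
      |e t| + δ ^ 2 * norm2 v + δ * norm2 e := by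
  have hPv := mul_le_mul_of_nonneg_left
    (hPA.norm2_mulVec_transpose_mulVec_le_of_sparse hδ hQ hv) hδ
  have hPe := mul_le_mul_of_nonneg_left (norm2_mulVec_transpose_mulVec_le hQ e) hδ
  have hvt := hPA.abs_mulVec_apply_le hδ hs (Qᵀ *ᵥ v) t
  have het := hPA.abs_mulVec_apply_le hδ hs (Qᵀ *ᵥ e) t
  have hsplit : (v + e - Q *ᵥ (Qᵀ *ᵥ v) - Q *ᵥ (Qᵀ *ᵥ e)) t - v t =
      e t - (Q *ᵥ (Qᵀ *ᵥ v)) t - (Q *ᵥ (Qᵀ *ᵥ e)) t := by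
    simp only [Pi.sub_apply, Pi.add_apply]
    ring
  rw [hsplit]
  linarith [abs_sub (e t - (Q *ᵥ (Qᵀ *ᵥ v)) t) ((Q *ᵥ (Qᵀ *ᵥ e)) t),
    abs_sub (e t) ((Q *ᵥ (Qᵀ *ᵥ v)) t)]

variable {S : Finset (Fin n)} (hS : S.card ≤ s) (hδ2 : δ ^ 2 ≤ 1 / 2)
include hS hδ2

lemma norm2_gardCoeff_le (y : Fin n → ℝ) :
    norm2 (gardCoeff Q S y) ≤ 2 * δ * norm2 (Q *ᵥ (Qᵀ *ᵥ y)) := by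
  have hinv : (1 - δ ^ 2) * norm2 (gardCoeff Q S y) ≤
      norm2 (restrictVec S (Q *ᵥ (Qᵀ *ᵥ y))) := by
    rw [← norm2_colSel_transpose_mulVec]
    exact norm2_inv_one_sub_mulVec_le (by linarith) (hPA.norm2_gram_mulVec_le hδ hQ hS) _
  nlinarith [norm2_nonneg (gardCoeff Q S y), hPA.norm2_restrictVec_mulVec_le hδ hS (Qᵀ *ᵥ y)]

lemma norm2_gardVec_restrictVec_le {T : Finset (Fin n)} (hT : Disjoint T S) (hTs : T.card ≤ s)
    {u : Fin n → ℝ} (hsmall : 2 * δ ^ 2 * norm2 u ≤ norm2 (restrictVec S u)) :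
    norm2 (gardVec Q S (restrictVec T u)) ≤ norm2 u := by
  refine norm2_restrictVec_add_colSel_mulVec_le hT ?_
  calc norm2 (gardCoeff Q S (restrictVec T u))
      ≤ 2 * δ * norm2 (Q *ᵥ (Qᵀ *ᵥ restrictVec T u)) := hPA.norm2_gardCoeff_le hδ hQ hS hδ2 _
    _ ≤ 2 * δ * (δ * norm2 (restrictVec T u)) := by
        gcongr
        exact hPA.norm2_mulVec_transpose_mulVec_le_of_sparse hδ hQ (sparse_restrictVec hTs u)
    _ = 2 * δ ^ 2 * norm2 (restrictVec T u) := by ring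
    _ ≤ 2 * δ ^ 2 * norm2 u := by
        gcongr
        exact norm2_restrictVec_le T u
    _ ≤ norm2 (restrictVec S u) := hsmall

lemma two_mul_norm2_gardVec_restrictVec_le {T : Finset (Fin n)} (hT : Disjoint T S)
    (η : Fin n → ℝ) :
    2 * δ * norm2 (gardVec Q S (restrictVec T η)) ≤ Real.sqrt 6 * norm2 η := by
  set b := restrictVec T η
  have hb : ∀ i ∈ S, b i = 0 := fun i hi => if_neg (Finset.disjoint_right.mp hT hi)
  have hcoeff : norm2 (gardCoeff Q S b) ≤ 2 * δ * norm2 η :=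
    (hPA.norm2_gardCoeff_le hδ hQ hS hδ2 b).trans (by
      gcongr
      exact (norm2_mulVec_transpose_mulVec_le hQ b).trans (norm2_restrictVec_le T η))
  have hbη := norm2_restrictVec_le T η
  have hsq : norm2 (gardVec Q S b) ^ 2 ≤ 3 * norm2 η ^ 2 := by
    rw [gardVec, sq_norm2_add_colSel_mulVec hb]
    have := pow_le_pow_left₀ (norm2_nonneg _) hcoeff 2
    have := pow_le_pow_left₀ (norm2_nonneg _) hbη 2
    nlinarith [sq_nonneg (norm2 η)]
  refine (pow_le_pow_iff_left₀ (mul_nonneg (mul_nonneg zero_le_two hδ) (norm2_nonneg _))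
    (mul_nonneg (Real.sqrt_nonneg _) (norm2_nonneg _)) two_ne_zero).mp ?_
  rw [mul_pow, mul_pow, mul_pow, Real.sq_sqrt (by norm_num)]
  nlinarith [sq_nonneg (norm2 (gardVec Q S b)), sq_nonneg δ]

end PABound

end projection

theorem stmt18_general {n m s : ℕ} (Q : Matrix (Fin n) (Fin m) ℝ) (hQ : Qᵀ * Q = 1)
    (δ : ℝ) (hδ0 : 0 ≤ δ) (hPA : PABound Q s δ)
    (u₀ : Fin n → ℝ) (S : Finset (Fin n))
    (hSne : S.Nonempty) (hcard : S.card ≤ s)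
    (η : Fin n → ℝ) (ε₀ : ℝ) (hη : norm2 η ≤ ε₀)
    (hδhalf : δ < Real.sqrt 2 / 2)
    (hbound : δ ^ 2 <
      (S.inf' hSne (fun i => |u₀ i|) - (2 + Real.sqrt 6) * ε₀) / (2 * norm2 u₀))
    (Sk : Finset (Fin n)) (hSkne : Sk.Nonempty) (hSkS : Sk ⊂ S)
    (Mk : Matrix {i // i ∈ Sk} {i // i ∈ Sk} ℝ)
    (hMk : Mk = 1 - (colSel Sk)ᵀ * Q * Qᵀ * colSel Sk)
    (vk : Fin n → ℝ)
    (hvk : vk = restrictVec (S \ Sk) u₀ +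
      (colSel Sk).mulVec ((Mk⁻¹).mulVec
        ((colSel Sk)ᵀ.mulVec (Q.mulVec (Qᵀ.mulVec (restrictVec (S \ Sk) u₀))))))
    (ηk : Fin n → ℝ)
    (hηk : ηk = restrictVec (Finset.univ \ Sk) η +
      (colSel Sk).mulVec ((Mk⁻¹).mulVec
        ((colSel Sk)ᵀ.mulVec (Q.mulVec (Qᵀ.mulVec (restrictVec (Finset.univ \ Sk) η))))))
    (r : Fin n → ℝ)
    (hr : r = vk + ηk - Q.mulVec (Qᵀ.mulVec vk) - Q.mulVec (Qᵀ.mulVec ηk)) :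
    IsUnit Mk ∧ ∀ i ∈ S \ Sk, ∀ j ∉ S, |r j| < |r i| := by
  subst hMk
  change vk = gardVec Q Sk (restrictVec (S \ Sk) u₀) at hvk
  change ηk = gardVec Q Sk (restrictVec (Finset.univ \ Sk) η) at hηk
  have hδ2 : δ ^ 2 ≤ 1 / 2 := by nlinarith [Real.sq_sqrt (show (0 : ℝ) ≤ 2 by norm_num)]
  have hSk : Sk.card ≤ s := (Finset.card_le_card hSkS.subset).trans hcard
  refine ⟨isUnit_one_sub_of_norm2_mulVec_le (by linarith) (hPA.norm2_gram_mulVec_le hδ0 hQ hSk),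
    fun i hi j hj => ?_⟩
  have hε₀ : 0 ≤ ε₀ := (norm2_nonneg η).trans hη
  have hgap := mul_lt_of_lt_div_of_nonneg (sq_nonneg δ) (by linarith [norm2_nonneg u₀]) hbound
  have hvk_le : norm2 vk ≤ norm2 u₀ := hvk ▸ hPA.norm2_gardVec_restrictVec_le hδ0 hQ hSk hδ2
    Finset.sdiff_disjoint ((Finset.card_le_card Finset.sdiff_subset).trans hcard)
    ((show 2 * δ ^ 2 * norm2 u₀ ≤ S.inf' hSne (fun i => |u₀ i|) by
      linarith [mul_nonneg (Real.sqrt_nonneg 6) hε₀]).trans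
      (inf'_abs_le_norm2_restrictVec hSne hSkS.subset hSkne u₀))
  have hηk_le : 2 * δ * norm2 ηk ≤ Real.sqrt 6 * ε₀ :=
    hηk ▸ (hPA.two_mul_norm2_gardVec_restrictVec_le hδ0 hQ hSk hδ2 Finset.sdiff_disjoint η).trans
      (mul_le_mul_of_nonneg_left hη (Real.sqrt_nonneg 6))
  have hvk_sparse : Sparse s vk := hvk ▸ sparse_restrictVec_add_colSel_mulVec
    (by rwa [Finset.sdiff_union_of_subset hSkS.subset]) _ _
  have hnoise (t : Fin n) (ht : t ∉ Sk) :
      |r t - restrictVec (S \ Sk) u₀ t| ≤ ε₀ + δ ^ 2 * norm2 u₀ + δ * norm2 ηk := by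
    have hvt : vk t = restrictVec (S \ Sk) u₀ t := hvk ▸ add_colSel_mulVec_apply_of_notMem _ _ ht
    have hηt : ηk t = η t := by
      rw [hηk, gardVec, add_colSel_mulVec_apply_of_notMem _ _ ht, restrictVec,
        if_pos (by simpa using ht)]
    have := hPA.abs_residual_sub_le hδ0 hQ (hSne.card_pos.trans_le hcard) hvk_sparse ηk t
    rw [← hr, hvt, hηt] at this
    linarith [abs_apply_le_norm2 η t, mul_le_mul_of_nonneg_left hvk_le (sq_nonneg δ)]
  obtain ⟨hiS, hiSk⟩ := Finset.mem_sdiff.mp hi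
  refine abs_lt_abs_of_abs_sub_le (x₀ := u₀ i)
    (w := ε₀ + δ ^ 2 * norm2 u₀ + δ * norm2 ηk) ?_ ?_ ?_
  · simpa [restrictVec, hi] using hnoise i hiSk
  · simpa [restrictVec, hj] using hnoise j fun h => hj (hSkS.subset h)
  · linarith [Finset.inf'_le (fun i => |u₀ i|) hiS]

/-- Correct selection at every GARD step with inlier and outlier noise: if `δ < √2/2` and
`δ² < (min_{i ∈ S} |u₀ᵢ| − (2 + √6) ε₀) / (2‖u₀‖₂)`, then for every nonempty `S_k ⊊ S`
the matrix `M_k` is invertible and the residual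
`r = v_k + η_k − QQᵀ v_k − QQᵀ η_k` satisfies `|rᵢ| > |rⱼ|` for all `i ∈ S∖S_k`, `j ∈ Sᶜ`;
hence GARD recovers the support of the sparse outlier vector exactly. -/
theorem stmt18 {n m s : ℕ} (Q : Matrix (Fin n) (Fin m) ℝ) (hQ : Qᵀ * Q = 1)
    (δ : ℝ) (hδ0 : 0 ≤ δ) (hδ1 : δ ≤ 1) (hPA : PABound Q s δ)
    (u₀ : Fin n → ℝ) (S : Finset (Fin n)) (hsupp : ∀ i, i ∈ S ↔ u₀ i ≠ 0)
    (hSne : S.Nonempty) (hcard : S.card ≤ s)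
    (η : Fin n → ℝ) (ε₀ : ℝ) (hη : norm2 η ≤ ε₀)
    (hδhalf : δ < Real.sqrt 2 / 2)
    (hbound : δ ^ 2 <
      (S.inf' hSne (fun i => |u₀ i|) - (2 + Real.sqrt 6) * ε₀) / (2 * norm2 u₀))
    (Sk : Finset (Fin n)) (hSkne : Sk.Nonempty) (hSkS : Sk ⊂ S)
    (Mk : Matrix {i // i ∈ Sk} {i // i ∈ Sk} ℝ)
    (hMk : Mk = 1 - (colSel Sk)ᵀ * Q * Qᵀ * colSel Sk)
    (vk : Fin n → ℝ)
    (hvk : vk = restrictVec (S \ Sk) u₀ +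
      (colSel Sk).mulVec ((Mk⁻¹).mulVec
        ((colSel Sk)ᵀ.mulVec (Q.mulVec (Qᵀ.mulVec (restrictVec (S \ Sk) u₀))))))
    (ηk : Fin n → ℝ)
    (hηk : ηk = restrictVec (Finset.univ \ Sk) η +
      (colSel Sk).mulVec ((Mk⁻¹).mulVec
        ((colSel Sk)ᵀ.mulVec (Q.mulVec (Qᵀ.mulVec (restrictVec (Finset.univ \ Sk) η))))))
    (r : Fin n → ℝ)
    (hr : r = vk + ηk - Q.mulVec (Qᵀ.mulVec vk) - Q.mulVec (Qᵀ.mulVec ηk)) :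
    IsUnit Mk ∧ ∀ i ∈ S \ Sk, ∀ j ∉ S, |r j| < |r i| :=
  stmt18_general Q hQ δ hδ0 hPA u₀ S hSne hcard η ε₀ hη hδhalf hbound Sk hSkne hSkS Mk hMk vk hvk ηk
    hηk r hr
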